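/- If miner i deviates from the Nash equilibrium to x_i* + Δ with Δ > 0, then the utility loss incurred to any other miner j ≠ i equals Δ·(c* − c_j)/(1 + c*·Δ), which is strictly positive. -/

import Mathlib

/-!
Since `∑ c_k = (n - 1) c*`, the equilibrium total `∑ (1 - c_k / c*) / c*` is `1 / c*`.
Miner `i`'s deviation leaves miner `j`'s allocation and cost unchanged and only raises the total
to `1 / c* + Δ`, so miner `j`, holding `x_j* = (c* - c_j) / c*²`, loses
`x_j* (c* - 1 / (1 / c* + Δ)) = Δ (c* - c_j) / (1 + c* Δ)`.
-/

open Finset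

/-- Payoff of miner `i` in the mining game with costs `c` and allocations `x`. -/
noncomputable def payoff {n : ℕ} (c x : Fin n → ℝ) (i : Fin n) : ℝ :=
  x i / (∑ j, x j) - c i * x i

theorem sum_update_add_self {ι M : Type*} [Fintype ι] [DecidableEq ι] [AddCommMonoid M]
    (x : ι → M) (i : ι) (Δ : M) :
    ∑ k, Function.update x i (x i + Δ) k = ∑ k, x k + Δ := by
  rw [sum_update_of_mem (mem_univ i), sdiff_singleton_eq_erase, ← add_sum_erase _ x (mem_univ i)]
  abel

theorem payoff_sub_payoff_update_of_ne {n : ℕ} (c x : Fin n → ℝ) {i j : Fin n} (hij : j ≠ i)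
    (Δ : ℝ) :
    payoff c x j - payoff c (Function.update x i (x i + Δ)) j
      = x j / ∑ k, x k - x j / (∑ k, x k + Δ) := by
  simp only [payoff, sum_update_add_self, Function.update_of_ne hij]
  ring

noncomputable def equilibrium {ι : Type*} (c : ι → ℝ) (cstar : ℝ) (k : ι) : ℝ :=
  (1 - c k / cstar) / cstar

theorem sum_equilibrium {ι : Type*} [Fintype ι] (c : ι → ℝ) {cstar : ℝ} (hcstar : cstar ≠ 0)
    (h : cstar = (∑ k, c k) / (Fintype.card ι - 1)) :
    ∑ k, equilibrium c cstar k = 1 / cstar := by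
  have hcard : (Fintype.card ι : ℝ) - 1 ≠ 0 := by
    rintro h0
    simp only [h0, div_zero] at h
    exact hcstar h
  have hsum : ∑ k, c k = cstar * (Fintype.card ι - 1) := by
    rw [h]
    field_simp
  simp only [equilibrium]
  rw [← sum_div, sum_sub_distrib, ← sum_div, hsum]
  simp only [sum_const, card_univ, nsmul_eq_mul, mul_one]
  field_simp
  ring

theorem equilibrium_div_sub_div_add {ι : Type*} (c : ι → ℝ) {cstar Δ : ℝ} (hcstar : 0 < cstar)
    (hΔ : 0 ≤ Δ) (j : ι) :
    equilibrium c cstar j / (1 / cstar) - equilibrium c cstar j / (1 / cstar + Δ)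
      = Δ * (cstar - c j) / (1 + cstar * Δ) := by
  have : 0 < 1 + cstar * Δ := by positivity
  simp only [equilibrium]
  field_simp
  ring

theorem other_miner_loss_general (n : ℕ) (c : Fin n → ℝ)
    (hc : ∀ i, 0 < c i)
    (cstar : ℝ) (hcstar : cstar = (∑ k, c k) / ((n : ℝ) - 1))
    (hpart : ∀ j, c j < cstar)
    (xstar : Fin n → ℝ) (hx : ∀ i, xstar i = (1 - c i / cstar) / cstar)
    (i j : Fin n) (hij : j ≠ i) (Δ : ℝ) (hΔ : 0 < Δ) :
    payoff c xstar j - payoff c (Function.update xstar i (xstar i + Δ)) j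
      = Δ * (cstar - c j) / (1 + cstar * Δ) ∧
    0 < payoff c xstar j - payoff c (Function.update xstar i (xstar i + Δ)) j := by
  have hcstar_pos : 0 < cstar := (hc i).trans (hpart i)
  obtain rfl : xstar = equilibrium c cstar := funext hx
  have hloss : payoff c (equilibrium c cstar) j
      - payoff c (Function.update (equilibrium c cstar) i (equilibrium c cstar i + Δ)) j
      = Δ * (cstar - c j) / (1 + cstar * Δ) := by
    rw [payoff_sub_payoff_update_of_ne c _ hij,
      sum_equilibrium c hcstar_pos.ne' (by simpa using hcstar)]
    exact equilibrium_div_sub_div_add c hcstar_pos hΔ.le j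
  refine ⟨hloss, hloss ▸ div_pos (mul_pos hΔ (sub_pos.mpr (hpart j))) ?_⟩
  positivity

/-- the utility loss incurred to any other miner `j ≠ i` by miner `i`'s
deviation from Nash equilibrium to `x_i* + Δ` equals `Δ(c* − c_j)/(1 + c*Δ) > 0`. -/
theorem other_miner_loss (n : ℕ) (hn : 2 ≤ n) (c : Fin n → ℝ)
    (hc : ∀ i, 0 < c i)
    (cstar : ℝ) (hcstar : cstar = (∑ k, c k) / ((n : ℝ) - 1))
    (hpart : ∀ j, c j < cstar)
    (xstar : Fin n → ℝ) (hx : ∀ i, xstar i = (1 - c i / cstar) / cstar)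
    (i j : Fin n) (hij : j ≠ i) (Δ : ℝ) (hΔ : 0 < Δ) :
    payoff c xstar j - payoff c (Function.update xstar i (xstar i + Δ)) j
      = Δ * (cstar - c j) / (1 + cstar * Δ) ∧
    0 < payoff c xstar j - payoff c (Function.update xstar i (xstar i + Δ)) j :=
  other_miner_loss_general n c hc cstar hcstar hpart xstar hx i j hij Δ hΔ
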